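/- The function w(t) := 2 + (7 − 8 log 2)/t − (8 log t)/t − 4/t² on (1/2, 1), extended by 0 elsewhere on [0,1], satisfies sup over t ∈ [0,1] of |w(t)| = 8 log 2 − 5, attained in the limit t → 1⁻. -/

import Mathlib

open Filter

/-- The variance-correction function `w` of the Kakutani process, extended by `0`. -/
noncomputable def wfun (t : ℝ) : ℝ :=
  if 1 / 2 < t ∧ t < 1 then 2 + (7 - 8 * Real.log 2) / t - (8 * Real.log t) / t - 4 / t ^ 2 else 0

/-! After multiplying by `t²`, both bounds on `(1/2, 1)` compare a polynomial in `t` with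
`t log t`. They follow from the first term of the series `log s = 2 artanh ((s - 1) / (s + 1))`,
taken at `s = t` for the lower bound (sharp at `t = 1`) and at `s = 2t` for the upper bound
(sharp at `t = 1/2`, where `w` vanishes). -/

open Real Set Topology

lemma two_mul_sub_one_div_add_one_le_log {s : ℝ} (hs : 1 ≤ s) :
    2 * (s - 1) / (s + 1) ≤ log s := by
  have hx₀ : 0 ≤ (s - 1) / (s + 1) := div_nonneg (by linarith) (by linarith)
  have hx₁ : (s - 1) / (s + 1) < 1 := (div_lt_one (by linarith)).2 (by linarith)
  have hs' : (1 + (s - 1) / (s + 1)) / (1 - (s - 1) / (s + 1)) = s := by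
    field_simp
    ring
  have key := sum_range_le_log_div hx₀ hx₁ 1
  simp only [Finset.sum_range_one, mul_zero, zero_add, pow_one, Nat.cast_zero, div_one,
    hs'] at key
  rw [mul_div_assoc]
  linarith

lemma log_le_two_mul_sub_one_div_add_one {s : ℝ} (hs₀ : 0 < s) (hs : s ≤ 1) :
    log s ≤ 2 * (s - 1) / (s + 1) := by
  have key := two_mul_sub_one_div_add_one_le_log (one_le_inv_iff₀.2 ⟨hs₀, hs⟩)
  have hinv : 2 * (s⁻¹ - 1) / (s⁻¹ + 1) = -(2 * (s - 1) / (s + 1)) := by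
    field_simp
    ring
  rw [log_inv, hinv] at key
  linarith

lemma five_lt_eight_mul_log_two : 5 < 8 * log 2 := by
  linarith [log_two_gt_d9]

section wfun

variable {t : ℝ}

lemma wfun_of_mem_Ioo (ht : t ∈ Ioo (1 / 2) 1) :
    wfun t = 2 + (7 - 8 * log 2) / t - (8 * log t) / t - 4 / t ^ 2 :=
  if_pos ht

lemma wfun_of_notMem_Ioo (ht : t ∉ Ioo (1 / 2) 1) : wfun t = 0 :=
  if_neg ht

lemma neg_le_wfun : -(8 * log 2 - 5) ≤ wfun t := by
  by_cases ht : t ∈ Ioo (1 / 2) 1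
  · obtain ⟨ht₁, ht₂⟩ := ht
    have ht₀ : 0 < t := by linarith
    have hlog : (t + 1) * log t ≤ 2 * (t - 1) := by
      have := log_le_two_mul_sub_one_div_add_one ht₀ ht₂.le
      rwa [le_div_iff₀ (by linarith), mul_comm] at this
    -- the quadratic is convex and negative at both ends of `[1/2, 1]`
    have hq : (8 * log 2 - 3) * t ^ 2 + (8 * log 2 - 15) * t + 4 ≤ 0 := by
      have hmid := mul_nonneg (sub_nonneg.2 ht₁.le) (sub_nonneg.2 ht₂.le)
      nlinarith [log_two_gt_d9, log_two_lt_d9]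
    have hnum : 0 ≤ (8 * log 2 - 3) * t ^ 2 + (7 - 8 * log 2) * t - 4 - 8 * t * log t := by
      nlinarith [mul_le_mul_of_nonneg_left hlog (by linarith : (0 : ℝ) ≤ 8 * t),
        mul_nonneg (sub_nonneg.2 ht₂.le) (neg_nonneg.2 hq)]
    have hid : wfun t + (8 * log 2 - 5) =
        ((8 * log 2 - 3) * t ^ 2 + (7 - 8 * log 2) * t - 4 - 8 * t * log t) / t ^ 2 := by
      rw [wfun_of_mem_Ioo ⟨ht₁, ht₂⟩]
      field_simp
      ring
    have : 0 ≤ wfun t + (8 * log 2 - 5) := hid ▸ by positivity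
    linarith
  · rw [wfun_of_notMem_Ioo ht]
    linarith [five_lt_eight_mul_log_two]

lemma wfun_le : wfun t ≤ 8 * log 2 - 5 := by
  by_cases ht : t ∈ Ioo (1 / 2) 1
  · obtain ⟨ht₁, ht₂⟩ := ht
    have ht₀ : 0 < t := by linarith
    have hlog : 2 * (2 * t - 1) - (2 * t + 1) * log 2 ≤ (2 * t + 1) * log t := by
      have := two_mul_sub_one_div_add_one_le_log (by linarith : (1 : ℝ) ≤ 2 * t)
      rw [div_le_iff₀ (by linarith), log_mul two_ne_zero ht₀.ne'] at this
      linarith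
    have hcubic : 0 ≤ (16 * log 2 - 14) * t ^ 3 + (8 * log 2 + 11) * t ^ 2 - 15 * t + 4 := by
      have hL : 0 ≤ (log 2 - 0.6931) * (16 * t ^ 3 + 8 * t ^ 2) :=
        mul_nonneg (by linarith [log_two_gt_d9]) (by positivity)
      have hmid := mul_nonneg (sub_nonneg.2 ht₁.le) (sub_nonneg.2 ht₂.le)
      nlinarith [mul_nonneg hmid (sub_nonneg.2 ht₁.le)]
    have hnum : 0 ≤ (8 * log 2 - 7) * (t ^ 2 + t) + 8 * t * log t + 4 := by
      nlinarith [mul_le_mul_of_nonneg_left hlog (by linarith : (0 : ℝ) ≤ 8 * t)]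
    have hid : (8 * log 2 - 5) - wfun t =
        ((8 * log 2 - 7) * (t ^ 2 + t) + 8 * t * log t + 4) / t ^ 2 := by
      rw [wfun_of_mem_Ioo ⟨ht₁, ht₂⟩]
      field_simp
      ring
    have : 0 ≤ (8 * log 2 - 5) - wfun t := hid ▸ by positivity
    linarith
  · rw [wfun_of_notMem_Ioo ht]
    linarith [five_lt_eight_mul_log_two]

lemma abs_wfun_le : |wfun t| ≤ 8 * log 2 - 5 :=
  abs_le.2 ⟨neg_le_wfun, wfun_le⟩

end wfun

lemma tendsto_wfun_nhdsLT_one :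
    Tendsto wfun (𝓝[<] 1) (𝓝 (-(8 * log 2 - 5))) := by
  have hcont : ContinuousAt (fun t => 2 + (7 - 8 * log 2) / t - (8 * log t) / t - 4 / t ^ 2) 1 := by
    fun_prop (disch := norm_num)
  have hval : (2 + (7 - 8 * log 2) / 1 - (8 * log 1) / 1 - 4 / 1 ^ 2 : ℝ) = -(8 * log 2 - 5) := by
    simp only [log_one]
    ring
  refine (hval ▸ hcont.tendsto.mono_left nhdsWithin_le_nhds).congr' ?_
  filter_upwards [Ioo_mem_nhdsLT (by norm_num : (1 / 2 : ℝ) < 1)] with t ht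
  exact (wfun_of_mem_Ioo ht).symm

theorem sup_abs_w_eq :
    IsLUB ((fun t => |wfun t|) '' Set.Icc (0 : ℝ) 1) (8 * Real.log 2 - 5) ∧
    Tendsto wfun (nhdsWithin 1 (Set.Iio 1)) (nhds (-(8 * Real.log 2 - 5))) := by
  refine ⟨⟨?_, fun b hb => ?_⟩, tendsto_wfun_nhdsLT_one⟩
  · rintro _ ⟨t, -, rfl⟩
    exact abs_wfun_le
  · have habs : Tendsto (fun t => |wfun t|) (𝓝[<] 1) (𝓝 (8 * log 2 - 5)) := by
      have := tendsto_wfun_nhdsLT_one.abs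
      rwa [abs_neg, abs_of_pos (sub_pos.2 five_lt_eight_mul_log_two)] at this
    refine le_of_tendsto habs ?_
    filter_upwards [Ioo_mem_nhdsLT (by norm_num : (0 : ℝ) < 1)] with t ht
    exact hb ⟨t, Ioo_subset_Icc_self ht, rfl⟩
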